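/- arXiv:0712.0160 — 4 statements merged into one kernel-verified Lean document; each statement's English description precedes it below -/
import Mathlib

section
/- Let A be a finite-dimensional commutative Frobenius algebra over ℂ with trace form θ : A → ℂ and Euler element α ∈ A characterized by θ(α·x) = Tr_A(L_x) for all x ∈ A, where L_x is the operator of multiplication by x. If α is invertible in A, then A is semisimple. -/
/-!
The trace of multiplication by a nilpotent element vanishes, so for nilpotent `x` the defining
property of the Euler element gives `θ (α * x * b) = Tr (L_{x b}) = 0` for every `b`.
Nondegeneracy forces `α * x = 0`, and invertibility of `α` gives `x = 0`: the algebra is reduced.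
A reduced finite-dimensional commutative algebra is Artinian, hence the product of its residue
fields at the finitely many maximal ideals, and each of these is a finite extension of the
algebraically closed field `ℂ`, hence `ℂ` itself.
-/

theorem IsNilpotent.trace_mulLeft_eq_zero {K A : Type*} [Field K] [CommRing A] [Algebra K A]
    {x : A} (hx : IsNilpotent x) : LinearMap.trace K A (LinearMap.mulLeft K x) = 0 :=
  (Algebra.isNilpotent_trace_of_isNilpotent (R := K) hx).eq_zero

theorem isReduced_of_isUnit_euler {K A : Type*} [Field K] [CommRing A] [Algebra K A]
    (θ : A →ₗ[K] K) (hnd : ∀ a : A, (∀ b : A, θ (a * b) = 0) → a = 0) {α : A}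
    (hα : ∀ x : A, θ (α * x) = LinearMap.trace K A (LinearMap.mulLeft K x)) (hαunit : IsUnit α) :
    IsReduced A := by
  refine ⟨fun x hx => hαunit.mul_right_eq_zero.mp (hnd _ fun b => ?_)⟩
  rw [mul_assoc, hα]
  exact ((Commute.all x b).isNilpotent_mul_right hx).trace_mulLeft_eq_zero

attribute [local instance] Ideal.Quotient.field in
theorem exists_algEquiv_pi_of_isReduced (K A : Type*) [Field K] [IsAlgClosed K] [CommRing A]
    [Algebra K A] [FiniteDimensional K A] [IsReduced A] :
    ∃ N : ℕ, Nonempty (A ≃ₐ[K] (Fin N → K)) := by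
  have : IsArtinianRing A := .of_finite K A
  have := Fintype.ofFinite (MaximalSpectrum A)
  exact ⟨_, ⟨((IsArtinianRing.equivPi A).restrictScalars K).trans <|
    (AlgEquiv.piCongrRight fun _ ↦ (AlgEquiv.ofBijective (Algebra.ofId K _)
      IsAlgClosed.algebraMap_bijective_of_isIntegral).symm).trans <|
    AlgEquiv.piCongrLeft K (fun _ ↦ K) (Fintype.equivFin _)⟩⟩

/-- If the Euler element α of a finite-dimensional commutative Frobenius algebra A over ℂ
(characterized by θ(α·x) = Tr_A(L_x)) is invertible, then A is semisimple, i.e. isomorphic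
as a ℂ-algebra to a finite product of copies of ℂ. -/
theorem stmt_0
    (A : Type) [CommRing A] [Algebra ℂ A] [FiniteDimensional ℂ A]
    (θ : A →ₗ[ℂ] ℂ)
    (hnd : ∀ a : A, (∀ b : A, θ (a * b) = 0) → a = 0)
    (α : A)
    (hα : ∀ x : A, θ (α * x) = LinearMap.trace ℂ A (LinearMap.mulLeft ℂ x))
    (hαunit : IsUnit α) :
    ∃ N : ℕ, Nonempty (A ≃ₐ[ℂ] (Fin N → ℂ)) := by
  have := isReduced_of_isUnit_euler θ hnd hα hαunit
  exact exists_algEquiv_pi_of_isReduced ℂ A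
end

section
/- Let A be a finite-dimensional ℂ-vector space with nondegenerate symmetric bilinear form β, and let E(z) = Id + E₁z + E₂z² + ⋯ ∈ End(A)[[z]]. Let E*(z) denote the series of β-adjoints of the coefficients. Then the following are equivalent: (1) E*(z) ∘ E(−z) = Id in End(A)[[z]]; (2) the pointwise multiplication operator a(z) ↦ E(z)a(z) on A((z)) preserves the symplectic form Ω(a,b) = Res_{z=0} β(a(−z),b(z)) dz. -/
/-!
Let `c_k(x, y)` be the coefficient of `z^k` in `β(E(-z) x, E(z) y)`. Substituting `m = p - q`,
`n = -1 - p - r` in `Ω(Ea, Eb) = Σ_p (-1)^p Σ_{q,r} β(E_q a_{p-q}, E_r b_{-1-p-r})` gives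
`Ω(Ea, Eb) = Σ_{m,n} (-1)^m c_{-1-m-n}(a_m, b_n)`, a finite sum for Laurent series, so testing
on monomials shows that `E` preserves `Ω` iff `c_k = δ_{k0} β`. On the other hand
`β(C_k x, y) = c_k(x, y)` for the coefficient `C_k` of `z^k` in `E*(z) ∘ E(-z)`, so by
nondegeneracy `E*(z) ∘ E(-z) = Id` says the same thing.
-/

open Finset

section ResiduePairing

variable {𝕜 A : Type*} [Field 𝕜] [AddCommGroup A] [Module 𝕜 A]

/-- The action `a(z) ↦ E(z) a(z)` of `E(z) = Σ E_q z^q` on `A((z))`, coefficientwise. -/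
noncomputable def seriesApply (E : ℕ → Module.End 𝕜 A) (a : ℤ → A) (p : ℤ) : A :=
  ∑ᶠ q : ℕ, E q (a (p - q))

/-- `Ω(a, b) = Res_{z=0} β(a(-z), b(z)) dz`. -/
noncomputable def residuePairing (B : A →ₗ[𝕜] A →ₗ[𝕜] 𝕜) (a b : ℤ → A) : 𝕜 :=
  ∑ᶠ p : ℤ, (-1 : 𝕜) ^ p * B (a p) (b (-1 - p))

/-- The coefficient of `z^k` in `β(E(-z) x, E(z) y)`. -/
def pairingCoeff (B : A →ₗ[𝕜] A →ₗ[𝕜] 𝕜) (E : ℕ → Module.End 𝕜 A) (k : ℕ) (x y : A) : 𝕜 :=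
  ∑ j ∈ range (k + 1), (-1 : 𝕜) ^ j * B (E j x) (E (k - j) y)

variable {B : A →ₗ[𝕜] A →ₗ[𝕜] 𝕜} {E : ℕ → Module.End 𝕜 A} {a b : ℤ → A} {Na Nb : ℤ}

@[simp]
lemma pairingCoeff_zero_left (k : ℕ) (y : A) : pairingCoeff B E k 0 y = 0 := by
  simp [pairingCoeff]

@[simp]
lemma pairingCoeff_zero_right (k : ℕ) (x : A) : pairingCoeff B E k x 0 = 0 := by
  simp [pairingCoeff]

lemma seriesApply_eq_sum_Icc (ha : ∀ n < Na, a n = 0) (p : ℤ) :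
    seriesApply E a p = ∑ m ∈ Icc Na p, E (p - m).toNat (a m) := by
  rw [seriesApply, finsum_eq_sum_of_support_subset (s := range (p - Na + 1).toNat)]
  · refine sum_nbij' (fun q => p - q) (fun m => (p - m).toNat) ?_ ?_ ?_ ?_ ?_ <;>
      intro q hq <;> simp only [mem_range, mem_Icc] at hq ⊢
    all_goals first | omega | (congr; omega)
  · intro q hq
    simp only [Function.mem_support, coe_range, Set.mem_Iio] at hq ⊢
    by_contra! hle
    exact hq (by rw [ha _ (by omega), map_zero])

lemma seriesApply_eq_zero_of_lt (ha : ∀ n < Na, a n = 0) {p : ℤ} (hp : p < Na) :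
    seriesApply E a p = 0 := by
  rw [seriesApply_eq_sum_Icc ha, Icc_eq_empty_of_lt hp, sum_empty]

lemma residuePairing_eq_sum_Icc (ha : ∀ n < Na, a n = 0) (hb : ∀ n < Nb, b n = 0) :
    residuePairing B a b = ∑ p ∈ Icc Na (-1 - Nb), (-1 : 𝕜) ^ p * B (a p) (b (-1 - p)) := by
  refine finsum_eq_sum_of_support_subset _ fun p hp => ?_
  simp only [Function.mem_support, coe_Icc, Set.mem_Icc] at hp ⊢
  by_contra! hout
  rcases le_or_gt Na p with hNa | hNa
  · exact hp (by rw [hb _ (by omega), map_zero, mul_zero])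
  · exact hp (by rw [ha _ hNa, map_zero, LinearMap.zero_apply, mul_zero])

lemma sum_Icc_neg_one_zpow_mul_eq_pairingCoeff {m n : ℤ} (hmn : n ≤ -1 - m) (x y : A) :
    ∑ p ∈ Icc m (-1 - n), (-1 : 𝕜) ^ p * B (E (p - m).toNat x) (E (-1 - p - n).toNat y)
      = (-1 : 𝕜) ^ m * pairingCoeff B E (-1 - m - n).toNat x y := by
  rw [pairingCoeff, mul_sum]
  refine sum_nbij' (fun p => (p - m).toNat) (fun j => m + j) ?_ ?_ ?_ ?_ ?_ <;>
    intro p hp <;> simp only [mem_range, mem_Icc] at hp ⊢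
  all_goals try omega
  have hk : (-1 - m - n).toNat - (p - m).toNat = (-1 - p - n).toNat := by omega
  rw [hk, ← mul_assoc, ← zpow_natCast, ← zpow_add₀ (by norm_num)]
  congr 2
  omega

lemma residuePairing_seriesApply (ha : ∀ n < Na, a n = 0) (hb : ∀ n < Nb, b n = 0) :
    residuePairing B (seriesApply E a) (seriesApply E b)
      = ∑ m ∈ Icc Na (-1 - Nb), ∑ n ∈ Icc Nb (-1 - m),
          (-1 : 𝕜) ^ m * pairingCoeff B E (-1 - m - n).toNat (a m) (b n) := by
  rw [residuePairing_eq_sum_Icc (fun _ => seriesApply_eq_zero_of_lt ha)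
    (fun _ => seriesApply_eq_zero_of_lt hb)]
  have hexpand : ∀ p, (-1 : 𝕜) ^ p * B (seriesApply E a p) (seriesApply E b (-1 - p))
      = ∑ m ∈ Icc Na p, ∑ n ∈ Icc Nb (-1 - p),
          (-1 : 𝕜) ^ p * B (E (p - m).toNat (a m)) (E (-1 - p - n).toNat (b n)) := by
    intro p
    rw [seriesApply_eq_sum_Icc ha, seriesApply_eq_sum_Icc hb, map_sum B, LinearMap.sum_apply,
      mul_sum]
    simp only [map_sum, mul_sum]
  simp only [hexpand]
  rw [sum_comm' (t' := Icc Na (-1 - Nb)) (s' := fun m => Icc m (-1 - Nb)) (by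
    intro p m; simp only [mem_Icc]; omega)]
  refine sum_congr rfl fun m hm => ?_
  rw [sum_comm' (t' := Icc Nb (-1 - m)) (s' := fun n => Icc m (-1 - n)) (by
    intro p n; simp only [mem_Icc] at hm ⊢; omega)]
  refine sum_congr rfl fun n hn => ?_
  exact sum_Icc_neg_one_zpow_mul_eq_pairingCoeff (mem_Icc.mp hn).2 _ _

lemma single_eq_zero_of_lt {i n : ℤ} (x : A) (hn : n < i) : (Pi.single i x : ℤ → A) n = 0 :=
  Pi.single_eq_of_ne hn.ne _

lemma residuePairing_seriesApply_single (k : ℕ) (x y : A) :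
    residuePairing B (seriesApply E (Pi.single 0 x)) (seriesApply E (Pi.single (-1 - k : ℤ) y))
      = pairingCoeff B E k x y := by
  rw [residuePairing_seriesApply (fun _ => single_eq_zero_of_lt x)
    (fun _ => single_eq_zero_of_lt y)]
  rw [sum_eq_single_of_mem 0 (by simp) fun m _ hm => by simp [Pi.single_eq_of_ne hm],
    sum_eq_single_of_mem (-1 - (k : ℤ)) (by simp) fun n _ hn => by simp [Pi.single_eq_of_ne hn]]
  simp

lemma residuePairing_single (k : ℕ) (x y : A) :
    residuePairing B (Pi.single 0 x) (Pi.single (-1 - k : ℤ) y)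
      = if k = 0 then B x y else 0 := by
  rw [residuePairing_eq_sum_Icc (fun _ => single_eq_zero_of_lt x)
    (fun _ => single_eq_zero_of_lt y),
    sum_eq_single_of_mem 0 (by simp) fun p _ hp => by simp [Pi.single_eq_of_ne hp]]
  have hk0 : (-1 : ℤ) = -1 - k ↔ k = 0 := by omega
  simp only [zpow_zero, one_mul, Pi.single_eq_same, sub_zero, Pi.single_apply, hk0]
  split_ifs <;> simp

theorem residuePairing_seriesApply_eq_iff :
    (∀ a b : ℤ → A, (∃ Na : ℤ, ∀ n < Na, a n = 0) → (∃ Nb : ℤ, ∀ n < Nb, b n = 0) →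
      residuePairing B (seriesApply E a) (seriesApply E b) = residuePairing B a b) ↔
    ∀ k x y, pairingCoeff B E k x y = if k = 0 then B x y else 0 := by
  constructor
  · intro h k x y
    rw [← residuePairing_seriesApply_single, ← residuePairing_single]
    exact h _ _ ⟨_, fun _ => single_eq_zero_of_lt x⟩ ⟨_, fun _ => single_eq_zero_of_lt y⟩
  · rintro h a b ⟨Na, ha⟩ ⟨Nb, hb⟩
    rw [residuePairing_seriesApply ha hb, residuePairing_eq_sum_Icc ha hb]
    refine sum_congr rfl fun m hm => ?_
    rw [mem_Icc] at hm
    rw [sum_eq_single (-1 - m)]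
    · simp [h]
    · intro n hn hne
      rw [mem_Icc] at hn
      rw [h, if_neg (by omega), mul_zero]
    · intro hnot
      exact absurd (mem_Icc.mpr ⟨by omega, le_rfl⟩) hnot

/-- The coefficient of `z^k` in `E*(z) ∘ E(-z)`. -/
def adjointProductCoeff (Estar E : ℕ → Module.End 𝕜 A) (k : ℕ) : Module.End 𝕜 A :=
  ∑ p ∈ range (k + 1), ((-1 : 𝕜) ^ (k - p)) • (Estar p ∘ₗ E (k - p))

lemma adjointProductCoeff_apply_apply {Estar : ℕ → Module.End 𝕜 A}
    (hadj : ∀ k x y, B (Estar k x) y = B x (E k y)) (k : ℕ) (x y : A) :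
    B (adjointProductCoeff Estar E k x) y = pairingCoeff B E k x y := by
  rw [pairingCoeff, ← sum_range_reflect, adjointProductCoeff, LinearMap.sum_apply, map_sum,
    LinearMap.sum_apply]
  refine sum_congr rfl fun p hp => ?_
  have hpk : k - (k - p) = p := by rw [mem_range] at hp; omega
  simp only [LinearMap.smul_apply, LinearMap.comp_apply, map_smul, LinearMap.smul_apply,
    smul_eq_mul, hadj, hpk, Nat.add_sub_cancel]

lemma adjointProductCoeff_eq_ite_iff {Estar : ℕ → Module.End 𝕜 A}
    (hadj : ∀ k x y, B (Estar k x) y = B x (E k y)) (hB : B.SeparatingLeft) (k : ℕ) :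
    adjointProductCoeff Estar E k = (if k = 0 then 1 else 0) ↔
      ∀ x y, pairingCoeff B E k x y = if k = 0 then B x y else 0 := by
  have hinj : Function.Injective B :=
    LinearMap.ker_eq_bot.mp (LinearMap.separatingLeft_iff_ker_eq_bot.mp hB)
  rw [LinearMap.ext_iff]
  refine forall_congr' fun x => ?_
  rw [← hinj.eq_iff, LinearMap.ext_iff]
  refine forall_congr' fun y => ?_
  rw [adjointProductCoeff_apply_apply hadj]
  split_ifs <;> simp

end ResiduePairing

theorem stmt_7_general
    (A : Type) [AddCommGroup A] [Module ℂ A]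
    (B : A →ₗ[ℂ] A →ₗ[ℂ] ℂ)
    (hnd : ∀ x, (∀ y, B x y = 0) → x = 0)
    (E Estar : ℕ → Module.End ℂ A)
    (hadj : ∀ k x y, B (Estar k x) y = B x (E k y)) :
    (∀ k : ℕ, ∑ p ∈ Finset.range (k + 1),
        ((-1 : ℂ) ^ (k - p)) • (Estar p ∘ₗ E (k - p)) = if k = 0 then 1 else 0)
    ↔
    (∀ a b : ℤ → A, (∃ Na : ℤ, ∀ n < Na, a n = 0) → (∃ Nb : ℤ, ∀ n < Nb, b n = 0) →
      (∑ᶠ p : ℤ, (-1 : ℂ) ^ p *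
          B (∑ᶠ q : ℕ, E q (a (p - q))) (∑ᶠ q : ℕ, E q (b (-1 - p - q))))
        = ∑ᶠ p : ℤ, (-1 : ℂ) ^ p * B (a p) (b (-1 - p))) :=
  (forall_congr' fun k => adjointProductCoeff_eq_ite_iff hadj hnd k).trans
    residuePairing_seriesApply_eq_iff.symm

/-- For E(z) = Id + E₁z + ⋯ ∈ End(A)[[z]] with β-adjoint series E*(z), the condition
E*(z)∘E(−z) = Id (coefficientwise: Σ_{p+q=k} (−1)^q E*_p ∘ E_q = δ_{k0} Id) holds iff the
pointwise action of E on Laurent series A((z)) preserves Ω(a,b) = Res β(a(−z),b(z))dz. -/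
theorem stmt_7
    (A : Type) [AddCommGroup A] [Module ℂ A] [FiniteDimensional ℂ A]
    (B : A →ₗ[ℂ] A →ₗ[ℂ] ℂ)
    (hsymm : ∀ x y, B x y = B y x)
    (hnd : ∀ x, (∀ y, B x y = 0) → x = 0)
    (E Estar : ℕ → Module.End ℂ A)
    (hE0 : E 0 = 1)
    (hadj : ∀ k x y, B (Estar k x) y = B x (E k y)) :
    (∀ k : ℕ, ∑ p ∈ Finset.range (k + 1),
        ((-1 : ℂ) ^ (k - p)) • (Estar p ∘ₗ E (k - p)) = if k = 0 then 1 else 0)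
    ↔
    (∀ a b : ℤ → A, (∃ Na : ℤ, ∀ n < Na, a n = 0) → (∃ Nb : ℤ, ∀ n < Nb, b n = 0) →
      (∑ᶠ p : ℤ, (-1 : ℂ) ^ p *
          B (∑ᶠ q : ℕ, E q (a (p - q))) (∑ᶠ q : ℕ, E q (b (-1 - p - q))))
        = ∑ᶠ p : ℤ, (-1 : ℂ) ^ p * B (a p) (b (-1 - p))) :=
  stmt_7_general A B hnd E Estar hadj
end

section
/- Let A be a finite-dimensional ℂ-vector space with nondegenerate symmetric bilinear form β, and let E(z) ∈ Id + z·End(A)[[z]] satisfy the symplectic condition E*(z)∘E(−z) = Id. Define W_E(z₁,z₂) := (E(z₂)^{−1}E(−z₁)^* − Id)/(z₁+z₂) ∈ End(A)[[z₁,z₂]] (the numerator is divisible by z₁+z₂). Then W_E satisfies the symmetry W_E(z₁,z₂)* = W_E(z₂,z₁), where * is applied coefficient-wise. -/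
/-!
Evaluating `(z₁ + z₂) W = E(z₂)⁻¹ E(-z₁)* - Id` on the antidiagonal `z₁ = -z₂` gives
`E⁻¹ E* = Id`, hence `E* = E`, and then the symplectic condition gives `E⁻¹(z) = E(-z)`.
The numerator becomes `E(-z₂) E(-z₁) - Id`, whose adjoint is the numerator with `z₁, z₂`
swapped; since multiplication by `z₁ + z₂` is injective on bivariate series, `W` inherits
this symmetry.
-/

open Finset PowerSeries

/-- Coefficients of `(X + Y) * W`, where `W p q` is the coefficient of `X ^ p * Y ^ q`. -/
def mulXAddY {M : Type*} [AddZeroClass M] (W : ℕ → ℕ → M) (p q : ℕ) : M :=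
  (if p = 0 then 0 else W (p - 1) q) + (if q = 0 then 0 else W p (q - 1))

/-- Substituting `X = -Y` kills `(X + Y) * W`. -/
theorem sum_range_neg_one_pow_smul_mulXAddY_eq_zero {R M : Type*} [Ring R] [AddCommGroup M]
    [Module R M] (W : ℕ → ℕ → M) (k : ℕ) :
    ∑ p ∈ range (k + 1), (-1 : R) ^ p • mulXAddY W p (k - p) = 0 := by
  simp only [mulXAddY, smul_add, sum_add_distrib]
  rw [sum_range_succ', sum_range_succ, add_add_add_comm, ← sum_add_distrib]
  simp only [if_pos, Nat.sub_self, smul_zero, add_zero]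
  refine Finset.sum_eq_zero fun i hi => ?_
  have : k - (i + 1) = k - i - 1 := by omega
  simp [this, Nat.sub_ne_zero_of_lt (mem_range.1 hi), pow_succ]

theorem sum_antidiagonal_eq_ite_of_mulXAddY_eq {R M : Type*} [Ring R] [AddCommGroup M]
    [Module R M] {W F : ℕ → ℕ → M} (e : M)
    (hW : ∀ p q, mulXAddY W p q = (-1 : R) ^ p • F p q - if p = 0 ∧ q = 0 then e else 0)
    (k : ℕ) : ∑ ij ∈ antidiagonal k, F ij.1 ij.2 = if k = 0 then e else 0 := by
  have h := sum_range_neg_one_pow_smul_mulXAddY_eq_zero (R := R) W k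
  have hsq (n : ℕ) : (-1 : R) ^ n * (-1) ^ n = 1 := by
    rw [← pow_add, Even.neg_one_pow ⟨n, rfl⟩]
  simp only [hW, smul_sub, smul_smul, hsq, one_smul, sum_sub_distrib] at h
  rw [Nat.sum_antidiagonal_eq_sum_range_succ F, sub_eq_zero.1 h, sum_range_succ']
  simp

theorem eq_zero_of_mulXAddY_eq_zero {M : Type*} [AddZeroClass M] {D : ℕ → ℕ → M}
    (hD : ∀ p q, mulXAddY D p q = 0) : ∀ p q, D p q = 0 := by
  intro p
  induction p with
  | zero => intro q; simpa [mulXAddY] using hD 0 (q + 1)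
  | succ p ih => intro q; simpa [mulXAddY, ih] using hD (p + 1) (q + 1)

section Bilinear

variable {R M P : Type*} [CommRing R] [AddCommGroup M] [Module R M] [AddCommGroup P] [Module R P]
  (B : M →ₗ[R] M →ₗ[R] P)

theorem mulXAddY_apply_sub (W : ℕ → ℕ → Module.End R M) (x y : M) (p q : ℕ) :
    mulXAddY (fun p q => B (W p q x) y - B x (W q p y)) p q
      = B (mulXAddY W p q x) y - B x (mulXAddY W q p y) := by
  unfold mulXAddY
  split_ifs <;> simp only [zero_add, add_zero, LinearMap.add_apply, LinearMap.zero_apply, map_add,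
    map_zero] <;> abel

theorem isAdjointPair_swap_of_mulXAddY_eq {W N : ℕ → ℕ → Module.End R M}
    (hW : ∀ p q, mulXAddY W p q = N p q) (hN : ∀ p q, LinearMap.IsAdjointPair B B (N p q) (N q p))
    (p q : ℕ) : LinearMap.IsAdjointPair B B (W p q) (W q p) := by
  intro x y
  refine sub_eq_zero.1 (eq_zero_of_mulXAddY_eq_zero
    (D := fun p q => B (W p q x) y - B x (W q p y)) (fun p q => ?_) p q)
  rw [mulXAddY_apply_sub, hW, hW, hN, sub_self]

end Bilinear

namespace PowerSeries

variable {R : Type*} [Semiring R]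

theorem mk_injective : Function.Injective (mk : (ℕ → R) → R⟦X⟧) :=
  fun f g h => funext fun n => by simpa using congrArg (coeff n) h

theorem mk_mul_mk_eq_one_iff (f g : ℕ → R) :
    mk f * mk g = 1 ↔ ∀ k, ∑ p ∈ range (k + 1), f p * g (k - p) = if k = 0 then 1 else 0 := by
  simp only [PowerSeries.ext_iff, coeff_mul, Nat.sum_antidiagonal_eq_sum_range_succ_mk, coeff_mk,
    coeff_one]

end PowerSeries

theorem stmt_8_general
    (A : Type) [AddCommGroup A] [Module ℂ A]
    (B : A →ₗ[ℂ] A →ₗ[ℂ] ℂ)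
    (E Estar Einv : ℕ → Module.End ℂ A)
    (hadj : ∀ k x y, B (Estar k x) y = B x (E k y))
    (hsymp : ∀ k : ℕ, ∑ p ∈ Finset.range (k + 1),
        ((-1 : ℂ) ^ (k - p)) • (Estar p ∘ₗ E (k - p)) = if k = 0 then 1 else 0)
    (hinv : ∀ k : ℕ, ∑ p ∈ Finset.range (k + 1), (E p ∘ₗ Einv (k - p))
        = if k = 0 then 1 else 0)
    (hinv' : ∀ k : ℕ, ∑ p ∈ Finset.range (k + 1), (Einv p ∘ₗ E (k - p))
        = if k = 0 then 1 else 0)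
    (W : ℕ → ℕ → Module.End ℂ A)
    (hW : ∀ p q : ℕ,
        (if p = 0 then 0 else W (p - 1) q) + (if q = 0 then 0 else W p (q - 1))
          = ((-1 : ℂ) ^ p) • (Einv q ∘ₗ Estar p) - (if p = 0 ∧ q = 0 then 1 else 0)) :
    ∀ (p q : ℕ) (x y : A), B (W p q x) y = B x (W q p y) := by
  have hEinv_Estar : mk Einv * mk Estar = 1 := by
    refine PowerSeries.ext fun k => ?_
    rw [coeff_mul, coeff_one, ← Nat.sum_antidiagonal_swap]
    simp only [Prod.fst_swap, Prod.snd_swap, coeff_mk]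
    exact sum_antidiagonal_eq_ite_of_mulXAddY_eq 1 hW k
  have hEstar : Estar = E := mk_injective
    (left_inv_eq_right_inv ((mk_mul_mk_eq_one_iff _ _).2 hinv) hEinv_Estar).symm
  subst Estar
  have hE_Eneg : mk E * mk (fun k => (-1 : ℂ) ^ k • E k) = 1 :=
    (mk_mul_mk_eq_one_iff _ _).2 fun k => by
      simpa [Module.End.mul_eq_comp, LinearMap.comp_smul] using hsymp k
  have hEinv : Einv = fun k => (-1 : ℂ) ^ k • E k :=
    mk_injective (left_inv_eq_right_inv ((mk_mul_mk_eq_one_iff _ _).2 hinv') hE_Eneg)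
  subst Einv
  refine isAdjointPair_swap_of_mulXAddY_eq B hW fun p q x y => ?_
  simp only [LinearMap.sub_apply, LinearMap.smul_apply, LinearMap.comp_apply, map_sub, map_smul,
    hadj, smul_eq_mul, and_comm]
  rw [mul_left_comm]
  split_ifs <;> simp

/-- For symplectic E(z) = Id + O(z) in End(A)[[z]], the series
W_E(z₁,z₂) = (E(z₂)^{−1}E(−z₁)* − Id)/(z₁+z₂) (characterized coefficientwise by
(z₁+z₂)·W being the numerator) satisfies the symmetry W_E(z₁,z₂)* = W_E(z₂,z₁). -/
theorem stmt_8
    (A : Type) [AddCommGroup A] [Module ℂ A] [FiniteDimensional ℂ A]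
    (B : A →ₗ[ℂ] A →ₗ[ℂ] ℂ)
    (hsymm : ∀ x y, B x y = B y x)
    (hnd : ∀ x, (∀ y, B x y = 0) → x = 0)
    (E Estar Einv : ℕ → Module.End ℂ A)
    (hE0 : E 0 = 1)
    (hadj : ∀ k x y, B (Estar k x) y = B x (E k y))
    (hsymp : ∀ k : ℕ, ∑ p ∈ Finset.range (k + 1),
        ((-1 : ℂ) ^ (k - p)) • (Estar p ∘ₗ E (k - p)) = if k = 0 then 1 else 0)
    (hinv : ∀ k : ℕ, ∑ p ∈ Finset.range (k + 1), (E p ∘ₗ Einv (k - p))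
        = if k = 0 then 1 else 0)
    (hinv' : ∀ k : ℕ, ∑ p ∈ Finset.range (k + 1), (Einv p ∘ₗ E (k - p))
        = if k = 0 then 1 else 0)
    (W : ℕ → ℕ → Module.End ℂ A)
    (hW : ∀ p q : ℕ,
        (if p = 0 then 0 else W (p - 1) q) + (if q = 0 then 0 else W p (q - 1))
          = ((-1 : ℂ) ^ p) • (Einv q ∘ₗ Estar p) - (if p = 0 ∧ q = 0 then 1 else 0)) :
    ∀ (p q : ℕ) (x y : A), B (W p q x) y = B x (W q p y) :=
  stmt_8_general A B E Estar Einv hadj hsymp hinv hinv' W hW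
end

section
/- Let A be a finite-dimensional ℂ-vector space, D ∈ End(A) a diagonalizable operator with pairwise distinct eigenvalues (i.e. N = dim A distinct eigenvalues), and μ ∈ End(A). Suppose (E_k)_{k≥0} is a sequence in End(A) with E₀ = Id satisfying [D, E_{k+1}] = (μ + k·Id)∘E_k for all k ≥ 0. Then the sequence (E_k) is uniquely determined by D and μ; in particular any two such sequences coincide. -/
/-!
In the eigenbasis of `D` the commutator acts entrywise by `⁅D, T⁆ᵢⱼ = (λᵢ - λⱼ) Tᵢⱼ`, so its
diagonal vanishes and, the eigenvalues being distinct, `⁅D, T⁆ = 0` forces `T` to be diagonal.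
The equation for `k = 0` reads `⁅D, E₁⁆ = μ`, so the diagonal of `μ` vanishes. For the
difference `G = E - F` of two solutions, `G₀ = 0`; if `Gₖ = 0` then `⁅D, Gₖ₊₁⁆ = 0` makes
`Gₖ₊₁` diagonal, and the diagonal of `⁅D, Gₖ₊₂⁆ = (μ + k + 1) Gₖ₊₁` gives `(k + 1) Gₖ₊₁ = 0`.
-/

open Module

namespace Module.Basis

variable {ι R M : Type*} [CommRing R] [AddCommGroup M] [Module R M] (b : Basis ι R M)
  {D : End R M} {lam : ι → R}

theorem repr_apply_of_apply_eq_smul (hD : ∀ i, D (b i) = lam i • b i) (x : M) (i : ι) :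
    b.repr (D x) i = lam i * b.repr x i := by
  have h : b.coord i ∘ₗ D = lam i • b.coord i := b.ext fun j => by
    rcases eq_or_ne j i with rfl | hji <;> simp [*]
  simpa using LinearMap.congr_fun h x

theorem repr_lie_apply (hD : ∀ i, D (b i) = lam i • b i) (T : End R M) (i j : ι) :
    b.repr (⁅D, T⁆ (b j)) i = (lam i - lam j) * b.repr (T (b j)) i := by
  simp [Ring.lie_def, hD, b.repr_apply_of_apply_eq_smul hD, sub_mul]

variable [NoZeroDivisors R]

theorem repr_apply_eq_zero_of_lie_eq_zero (hlam : Function.Injective lam)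
    (hD : ∀ i, D (b i) = lam i • b i) {T : End R M} (hT : ⁅D, T⁆ = 0) {i j : ι} (hij : i ≠ j) :
    b.repr (T (b j)) i = 0 := by
  have h := b.repr_lie_apply hD T i j
  rw [hT] at h
  simpa [sub_eq_zero, hlam.ne hij] using h.symm

theorem apply_eq_smul_of_lie_eq_zero (hlam : Function.Injective lam)
    (hD : ∀ i, D (b i) = lam i • b i) {T : End R M} (hT : ⁅D, T⁆ = 0) (j : ι) :
    T (b j) = b.repr (T (b j)) j • b j := by
  refine b.repr.injective (Finsupp.ext fun i => ?_)
  rcases eq_or_ne i j with rfl | hij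
  · simp
  · simp [b.repr_apply_eq_zero_of_lie_eq_zero hlam hD hT hij, hij.symm]

theorem eq_zero_of_lie_eq_zero_of_lie_eq_mul (hlam : Function.Injective lam)
    (hD : ∀ i, D (b i) = lam i • b i) {μ T S : End R M} {c : R} (hc : c ≠ 0)
    (hμ : ∀ i, b.repr (μ (b i)) i = 0) (hT : ⁅D, T⁆ = 0) (hS : ⁅D, S⁆ = (μ + c • 1) * T) :
    T = 0 := by
  refine b.ext fun j => ?_
  have hTj := b.apply_eq_smul_of_lie_eq_zero hlam hD hT j
  have hdiag : c * b.repr (T (b j)) j = 0 := by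
    have h := b.repr_lie_apply hD S j j
    rw [hS, Module.End.mul_apply, hTj] at h
    simpa [hμ, mul_comm] using h.symm
  rw [hTj, (mul_eq_zero.mp hdiag).resolve_left hc, zero_smul, LinearMap.zero_apply]

theorem eq_of_lie_succ_eq_mul [CharZero R] (hlam : Function.Injective lam)
    (hD : ∀ i, D (b i) = lam i • b i) {μ : End R M} {E F : ℕ → End R M}
    (hE0 : E 0 = 1) (hF0 : F 0 = 1)
    (hE : ∀ k : ℕ, ⁅D, E (k + 1)⁆ = (μ + (k : R) • 1) * E k)
    (hF : ∀ k : ℕ, ⁅D, F (k + 1)⁆ = (μ + (k : R) • 1) * F k) :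
    E = F := by
  have hμ (i : ι) : b.repr (μ (b i)) i = 0 := by
    have h := b.repr_lie_apply hD (E 1) i i
    rw [hE 0, hE0] at h
    simpa using h
  have hG (k : ℕ) : ⁅D, E (k + 1) - F (k + 1)⁆ = (μ + (k : R) • 1) * (E k - F k) := by
    rw [mul_sub, ← hE, ← hF]
    simp only [Ring.lie_def, mul_sub, sub_mul]
    abel
  have hG0 (k : ℕ) : E k - F k = 0 := by
    induction k with
    | zero => rw [hE0, hF0, sub_self]
    | succ k ih =>
      refine b.eq_zero_of_lie_eq_zero_of_lie_eq_mul hlam hD (Nat.cast_ne_zero.mpr k.succ_ne_zero)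
        hμ ?_ (hG (k + 1))
      rw [hG, ih, mul_zero]
  exact funext fun k => sub_eq_zero.mp (hG0 k)

end Module.Basis

theorem stmt_12_general
    (A : Type) [AddCommGroup A] [Module ℂ A]
    (N : ℕ) (b : Module.Basis (Fin N) ℂ A)
    (D : Module.End ℂ A) (lam : Fin N → ℂ) (hlam : Function.Injective lam)
    (hD : ∀ i, D (b i) = lam i • b i)
    (μ : Module.End ℂ A)
    (E F : ℕ → Module.End ℂ A) (hE0 : E 0 = 1) (hF0 : F 0 = 1)
    (hE : ∀ k : ℕ, D ∘ₗ E (k + 1) - E (k + 1) ∘ₗ D = (μ + (k : ℂ) • 1) ∘ₗ E k)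
    (hF : ∀ k : ℕ, D ∘ₗ F (k + 1) - F (k + 1) ∘ₗ D = (μ + (k : ℂ) • 1) ∘ₗ F k) :
    E = F :=
  b.eq_of_lie_succ_eq_mul hlam hD hE0 hF0 (fun k => (Ring.lie_def _ _).trans (hE k))
    (fun k => (Ring.lie_def _ _).trans (hF k))

/-- If D is diagonalizable with pairwise distinct eigenvalues, a sequence (E_k) with E₀ = Id
satisfying [D,E_{k+1}] = (μ + k)E_k is uniquely determined by D and μ: any two such
sequences coincide. -/
theorem stmt_12
    (A : Type) [AddCommGroup A] [Module ℂ A] [FiniteDimensional ℂ A]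
    (N : ℕ) (b : Module.Basis (Fin N) ℂ A)
    (D : Module.End ℂ A) (lam : Fin N → ℂ) (hlam : Function.Injective lam)
    (hD : ∀ i, D (b i) = lam i • b i)
    (μ : Module.End ℂ A)
    (E F : ℕ → Module.End ℂ A) (hE0 : E 0 = 1) (hF0 : F 0 = 1)
    (hE : ∀ k : ℕ, D ∘ₗ E (k + 1) - E (k + 1) ∘ₗ D = (μ + (k : ℂ) • 1) ∘ₗ E k)
    (hF : ∀ k : ℕ, D ∘ₗ F (k + 1) - F (k + 1) ∘ₗ D = (μ + (k : ℂ) • 1) ∘ₗ F k) :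
    E = F :=
  stmt_12_general A N b D lam hlam hD μ E F hE0 hF0 hE hF
end
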